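/- For all integers k, l ≥ 0, every element φ of the subgroup of B_∞ generated by σ_1, …, σ_{l−1} (a copy of the braid group B_l) and every element ψ of the subgroup generated by σ_1, …, σ_{k−1} (a copy of B_k) satisfy β_{k,l} · φ · ψ^{↑l} = ψ · φ^{↑k} · β_{k,l}. -/

import Mathlib

namespace BraidPaper

/-- Relations of the infinite Artin braid group `B_∞`.  The generator with index `n : ℕ`
represents the Artin generator `σ_{n+1}` (so generators are `σ_1, σ_2, …`). -/
def BraidRels : Set (FreeGroup ℕ) :=
  {r | (∃ i : ℕ, r = .of i * .of (i + 1) * .of i * (.of (i + 1) * .of i * .of (i + 1))⁻¹) ∨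
       (∃ i j : ℕ, i + 2 ≤ j ∧ r = .of i * .of j * (.of j * .of i)⁻¹)}

/-- The infinite Artin braid group `B_∞`, presented by generators `σ_1, σ_2, …` and the
braid and far-commutativity relations. -/
abbrev BInf : Type := PresentedGroup BraidRels

/-- The Artin generator `σ i` of `B_∞` (meaningful for `i ≥ 1`). -/
def σ (i : ℕ) : BInf := PresentedGroup.of (i - 1)

lemma rel_eq_one {r : FreeGroup ℕ} (hr : r ∈ BraidRels) : PresentedGroup.mk BraidRels r = 1 := by
  have : r ∈ Subgroup.normalClosure BraidRels := Subgroup.subset_normalClosure hr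
  exact (QuotientGroup.eq_one_iff r).mpr this

lemma gen_braid (i : ℕ) :
    (PresentedGroup.of i : BInf) * .of (i + 1) * .of i = .of (i + 1) * .of i * .of (i + 1) := by
  have h := rel_eq_one (Or.inl ⟨i, rfl⟩)
  rw [map_mul, map_mul, map_mul, map_inv, map_mul, map_mul, mul_inv_eq_one] at h
  exact h

lemma gen_comm {i j : ℕ} (hij : i + 2 ≤ j) :
    (PresentedGroup.of i : BInf) * .of j = .of j * .of i := by
  have h := rel_eq_one (Or.inr ⟨i, j, hij, rfl⟩)
  rw [map_mul, map_mul, map_inv, map_mul, mul_inv_eq_one] at h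
  exact h

/-- The shift endomorphism `↑ℓ : B_∞ → B_∞`, `σ_i ↦ σ_{i+ℓ}`. -/
def shift (l : ℕ) : BInf →* BInf :=
  PresentedGroup.toGroup (f := fun n => (PresentedGroup.of (n + l) : BInf)) (by
    rintro r (⟨i, rfl⟩ | ⟨i, j, hij, rfl⟩) <;>
      simp only [map_mul, map_inv, FreeGroup.lift_apply_of, mul_inv_eq_one]
    · have h1 : i + 1 + l = i + l + 1 := by omega
      rw [h1]; exact gen_braid (i + l)
    · exact gen_comm (by omega : (i + l) + 2 ≤ j + l))

/-- The ascending product `σ_i σ_{i+1} ⋯ σ_{i+l-1}` (of `l` factors). -/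
def asc (i l : ℕ) : BInf := ((List.range l).map fun t => σ (i + t)).prod

/-- The descending product `σ_i σ_{i-1} ⋯ σ_{i-k+1}` (of `k` factors). -/
def desc (i k : ℕ) : BInf := ((List.range k).map fun t => σ (i - t)).prod

/-- The block transposition braid
`β_{k,l} = (σ_k σ_{k+1} ⋯ σ_{k+l-1})(σ_{k-1} σ_k ⋯ σ_{k+l-2}) ⋯ (σ_1 σ_2 ⋯ σ_l)`,
with `β_{k,0} = β_{0,l} = 1`. -/
def β (k l : ℕ) : BInf := ((List.range k).map fun r => asc (k - r) l).prod

/-- The positive (Garside) lift `ω_a = β_{1,1} β_{2,1} ⋯ β_{a-1,1}` of the longest element of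
the symmetric group `S_a`, with `ω_0 = ω_1 = 1`. -/
def ω (a : ℕ) : BInf := ((List.range (a - 1)).map fun t => β (t + 1) 1).prod

/-- The copy of the braid group `B_n` inside `B_∞`: the subgroup generated by
`σ_1, …, σ_{n-1}`. -/
def BSub (n : ℕ) : Subgroup BInf := Subgroup.closure {g | ∃ i, 1 ≤ i ∧ i < n ∧ g = σ i}
/-! Conjugation by `β_{k,l}` carries the strands `1, …, l` to the positions `k + 1, …, k + l`
and the strands `l + 1, …, l + k` to the positions `1, …, k`: on generators,
`β σ_i β⁻¹ = σ_{i+k}` for `i < l` and `β σ_{l+i} β⁻¹ = σ_i` for `i < k`. Since both sides of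
each identity are homomorphisms in the braid, checking it on generators suffices; the theorem
then follows because `B_k` commutes with `B_l^{↑k}`, their generators being far apart. -/

theorem _root_.SemiconjBy.of_mem_closure {G H : Type*} [Group G] [Group H] {s : Set G}
    (f g : G →* H) {a : H} (h : ∀ x ∈ s, SemiconjBy a (f x) (g x)) {x : G}
    (hx : x ∈ Subgroup.closure s) : SemiconjBy a (f x) (g x) := by
  have key : Set.EqOn ((MulAut.conj a).toMonoidHom.comp f) g s := fun y hy => by
    simp [(h y hy).eq]
  simpa [SemiconjBy, mul_inv_eq_iff_eq_mul] using MonoidHom.eqOn_closure key hx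

lemma commute_σ_σ {i j : ℕ} (hi : 1 ≤ i) (hij : i + 2 ≤ j) : Commute (σ i) (σ j) :=
  gen_comm (by omega)

lemma σ_braid {i : ℕ} (hi : 1 ≤ i) : σ i * σ (i + 1) * σ i = σ (i + 1) * σ i * σ (i + 1) := by
  have h : i + 1 - 1 = (i - 1) + 1 := by omega
  rw [σ, σ, h]
  exact gen_braid (i - 1)

lemma shift_σ {i : ℕ} (hi : 1 ≤ i) (l : ℕ) : shift l (σ i) = σ (i + l) := by
  rw [σ, σ, shift, PresentedGroup.toGroup.of]
  congr 1
  omega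

@[simp] lemma asc_zero (i : ℕ) : asc i 0 = 1 := rfl

lemma asc_succ (i l : ℕ) : asc i (l + 1) = asc i l * σ (i + l) := by
  simp [asc, List.range_succ]

lemma asc_add (i m n : ℕ) : asc i (m + n) = asc i m * asc (i + m) n := by
  simp [asc, List.range_add, Function.comp_def, add_assoc]

lemma commute_σ_asc {m i l : ℕ} (hm : 1 ≤ m) (hi : 1 ≤ i) (h : m + 2 ≤ i ∨ i + l + 1 ≤ m) :
    Commute (σ m) (asc i l) := by
  induction l with
  | zero => simp
  | succ n ih =>
    rw [asc_succ]
    refine (ih (by omega)).mul_right ?_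
    rcases h with h | h
    · exact commute_σ_σ hm (by omega)
    · exact (commute_σ_σ (by omega) (by omega)).symm

lemma asc_mul_σ {j l t : ℕ} (hj : 1 ≤ j) (ht : t + 2 ≤ l) :
    asc j l * σ (j + t) = σ (j + t + 1) * asc j l := by
  obtain ⟨r, rfl⟩ : ∃ r, l = t + 2 + r := ⟨l - (t + 2), by omega⟩
  set a := j + t
  have hsplit : asc j (t + 2 + r) = asc j t * (σ a * σ (a + 1)) * asc (a + 2) r := by
    rw [asc_add, asc_add, asc_succ, asc_succ, asc_zero, one_mul, add_zero, ← add_assoc j t 2]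
  have htail : Commute (σ a) (asc (a + 2) r) := commute_σ_asc (by omega) (by omega) (by omega)
  have hhead : Commute (σ (a + 1)) (asc j t) := commute_σ_asc (by omega) hj (by omega)
  rw [hsplit]
  calc asc j t * (σ a * σ (a + 1)) * asc (a + 2) r * σ a
      = asc j t * (σ a * σ (a + 1) * σ a) * asc (a + 2) r := by
        rw [mul_assoc _ (asc _ _), ← htail.eq]; group
    _ = asc j t * σ (a + 1) * (σ a * σ (a + 1)) * asc (a + 2) r := by
        rw [σ_braid (by omega)]; group
    _ = σ (a + 1) * (asc j t * (σ a * σ (a + 1)) * asc (a + 2) r) := by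
        rw [← hhead.eq]; group

/-- The case `k = 2` of sliding `σ_{k+l-1}` through `β_{k,l}` down to `σ_{k-1}`. -/
lemma asc_mul_asc_mul_σ {a : ℕ} (ha : 1 ≤ a) (l : ℕ) :
    asc (a + 1) l * asc a l * σ (a + l) = σ a * (asc (a + 1) l * asc a l) := by
  induction l with
  | zero => simp
  | succ n ih =>
    have hc : Commute (σ (a + n + 1)) (asc a n) := commute_σ_asc (by omega) ha (by omega)
    have h1 : a + 1 + n = a + n + 1 := by omega
    have h2 : a + (n + 1) = a + n + 1 := by omega
    calc asc (a + 1) (n + 1) * asc a (n + 1) * σ (a + (n + 1))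
        = asc (a + 1) n * (asc a n * σ (a + n + 1)) * (σ (a + n) * σ (a + n + 1)) := by
          rw [asc_succ, asc_succ, h1, h2, ← hc.eq]; group
      _ = asc (a + 1) n * asc a n * (σ (a + n) * σ (a + n + 1) * σ (a + n)) := by
          rw [σ_braid (by omega : 1 ≤ a + n)]; group
      _ = σ a * (asc (a + 1) n * (asc a n * σ (a + n + 1)) * σ (a + n)) := by
          rw [← mul_assoc, ← mul_assoc, ih]; group
      _ = σ a * (asc (a + 1) (n + 1) * asc a (n + 1)) := by
          rw [← hc.eq, asc_succ, asc_succ, h1]; group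

@[simp] lemma β_zero (l : ℕ) : β 0 l = 1 := rfl

lemma β_succ (k l : ℕ) : β (k + 1) l = asc (k + 1) l * β k l := by
  simp only [β, List.range_succ_eq_map, List.map_cons, List.prod_cons, List.map_map,
    Nat.sub_zero]
  congr 2
  exact List.map_congr_left fun r _ => by simp

lemma commute_σ_β {m k l : ℕ} (hm : k + l + 1 ≤ m) : Commute (σ m) (β k l) := by
  induction k with
  | zero => simp
  | succ n ih =>
    rw [β_succ]
    exact (commute_σ_asc (by omega) (by omega) (by omega)).mul_right (ih (by omega))

lemma β_mul_σ {k l i : ℕ} (hi : 1 ≤ i) (hil : i < l) : β k l * σ i = σ (i + k) * β k l := by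
  induction k with
  | zero => simp
  | succ n ih =>
    have h := asc_mul_σ (j := n + 1) (t := i - 1) (by omega) (by omega : i - 1 + 2 ≤ l)
    rw [show n + 1 + (i - 1) = i + n by omega] at h
    rw [β_succ, mul_assoc, ih, ← mul_assoc, h, mul_assoc, add_assoc]

lemma β_mul_σ_add {k l i : ℕ} (hi : 1 ≤ i) (hik : i < k) : β k l * σ (l + i) = σ i * β k l := by
  induction k with
  | zero => omega
  | succ n ih =>
    rcases Nat.lt_or_ge i n with hlt | hge
    · have hc : Commute (σ i) (asc (n + 1) l) := commute_σ_asc hi (by omega) (Or.inl (by omega))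
      rw [β_succ, mul_assoc, ih hlt, ← mul_assoc, ← mul_assoc, hc.eq]
    · -- `σ_{l+i}` passes through `β_{i-1,l}`; the top two rows of `β_{i+1,l}` slide it to `σ_i`.
      obtain ⟨j, rfl, rfl⟩ : ∃ j, i = j + 1 ∧ n = j + 1 := ⟨i - 1, by omega, by omega⟩
      have hc : Commute (σ (l + (j + 1))) (β j l) := commute_σ_β (by omega)
      have hslide := asc_mul_asc_mul_σ (a := j + 1) (by omega) l
      rw [show j + 1 + l = l + (j + 1) by omega] at hslide
      rw [β_succ, β_succ, ← mul_assoc, mul_assoc _ (β j l), ← hc.eq, ← mul_assoc, hslide,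
        mul_assoc, mul_assoc]

lemma β_mul_eq_shift_mul_β (k : ℕ) {l : ℕ} {φ : BInf} (hφ : φ ∈ BSub l) :
    β k l * φ = shift k φ * β k l :=
  SemiconjBy.of_mem_closure (MonoidHom.id _) (shift k)
    (by rintro _ ⟨i, hi, hil, rfl⟩; simpa [SemiconjBy, shift_σ hi] using β_mul_σ hi hil) hφ

lemma β_mul_shift_eq_mul_β {k : ℕ} (l : ℕ) {ψ : BInf} (hψ : ψ ∈ BSub k) :
    β k l * shift l ψ = ψ * β k l :=
  SemiconjBy.of_mem_closure (shift l) (MonoidHom.id _)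
    (by
      rintro _ ⟨i, hi, hik, rfl⟩
      simpa [SemiconjBy, shift_σ hi, add_comm i l] using β_mul_σ_add hi hik) hψ

lemma commute_shift_of_mem_BSub {k l : ℕ} {φ ψ : BInf} (hφ : φ ∈ BSub l) (hψ : ψ ∈ BSub k) :
    Commute ψ (shift k φ) := by
  have hgen : ∀ j, 1 ≤ j → j < k → Commute (σ j) (shift k φ) := fun j hj hjk =>
    SemiconjBy.of_mem_closure (shift k) (shift k)
      (by
        rintro _ ⟨i, hi, -, rfl⟩
        rw [shift_σ hi]
        exact commute_σ_σ hj (by omega)) hφ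
  refine (SemiconjBy.of_mem_closure (MonoidHom.id _) (MonoidHom.id _) ?_ hψ).symm
  rintro _ ⟨j, hj, hjk, rfl⟩
  exact (hgen j hj hjk).symm

/-- for `φ` in the copy of `B_l` and `ψ` in the copy of `B_k` inside `B_∞`,
`β_{k,l} · φ · ψ^{↑l} = ψ · φ^{↑k} · β_{k,l}`. -/
theorem beta_conjugation (k l : ℕ) (φ ψ : BInf) (hφ : φ ∈ BSub l) (hψ : ψ ∈ BSub k) :
    β k l * φ * shift l ψ = ψ * shift k φ * β k l := by
  calc β k l * φ * shift l ψ = shift k φ * (β k l * shift l ψ) := by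
        rw [β_mul_eq_shift_mul_β k hφ, mul_assoc]
    _ = shift k φ * ψ * β k l := by rw [β_mul_shift_eq_mul_β l hψ, mul_assoc]
    _ = ψ * shift k φ * β k l := by rw [(commute_shift_of_mem_BSub hφ hψ).eq]

end BraidPaper
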